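/- For R = k[x,y,z] with M = (x,y,z) and I_1 = (x, y^2, yz, z^2), the ideal M·I_1 is integrally closed. -/

import Mathlib

/-- The set of elements of `R` integral over the ideal `I`: `x` satisfying
`x ^ n + a 1 * x ^ (n-1) + ⋯ + a n = 0` with `a j ∈ I ^ j`. -/
def Ideal.intCl {R : Type*} [CommRing R] (I : Ideal R) : Set R :=
  {x | ∃ n : ℕ, 0 < n ∧ ∃ a : ℕ → R,
    (∀ j ∈ Finset.Icc 1 n, a j ∈ I ^ j) ∧
    x ^ n + ∑ j ∈ Finset.Icc 1 n, a j * x ^ (n - j) = 0}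

/-- Minimal number of generators of an ideal. -/
noncomputable def Ideal.mu {R : Type*} [CommRing R] (I : Ideal R) : ℕ :=
  sInf {n : ℕ | ∃ s : Finset R, s.card = n ∧ Ideal.span (s : Set R) = I}

/-- The `M`-adic order of an ideal `I`. -/
noncomputable def Ideal.ord {R : Type*} [CommRing R] (M I : Ideal R) : ℕ :=
  sSup {n : ℕ | I ≤ M ^ n}
noncomputable section
open MvPolynomial

variable {k : Type*}

/-- The variables of `k[x,y,z]`. -/
def px [CommSemiring k] : MvPolynomial (Fin 3) k := X 0
def py [CommSemiring k] : MvPolynomial (Fin 3) k := X 1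
def pz [CommSemiring k] : MvPolynomial (Fin 3) k := X 2

/-!
`M I₁ = (x², xy, xz, y³, y²z, yz², z³)` is a monomial ideal whose exponent set is cut out by the
two inequalities `a + b + c ≥ 2` and `2a + b + c ≥ 3`. An inequality `⟨w, ·⟩ ≥ t` describes the
ideal `{f | ν_w f ≥ t}` of the weighted-order valuation `ν_w` on `k[x,y,z]`, and valuation ideals
are integrally closed: if `ν f < t`, then in `f ^ n + ∑ a_j f ^ (n - j) = 0` with `a_j ∈ J ^ j`
the term `f ^ n` has strictly smaller value than all the others.
-/

theorem Ideal.subset_intCl {R : Type*} [CommRing R] (I : Ideal R) : (I : Set R) ⊆ I.intCl :=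
  fun x hx => ⟨1, one_pos, fun _ => -x, by simpa using I.neg_mem hx, by simp⟩

namespace AddValuation

variable {R : Type*} [CommRing R] (v : AddValuation R ℕ∞)

def geIdeal (t : ℕ) : Ideal R where
  carrier := {r | (t : ℕ∞) ≤ v r}
  add_mem' := v.map_le_add
  zero_mem' := by simp
  smul_mem' r x hx := by
    show (t : ℕ∞) ≤ v (r * x)
    exact v.map_mul r x ▸ le_add_left hx

variable {v}

theorem mem_geIdeal {t : ℕ} {r : R} : r ∈ v.geIdeal t ↔ (t : ℕ∞) ≤ v r := Iff.rfl

theorem geIdeal_mul_le (s t : ℕ) : v.geIdeal s * v.geIdeal t ≤ v.geIdeal (s + t) :=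
  Ideal.mul_le.2 fun a ha b hb => by
    rw [mem_geIdeal, v.map_mul, Nat.cast_add]
    exact add_le_add ha hb

theorem pow_le_geIdeal {J : Ideal R} {t : ℕ} (hJ : J ≤ v.geIdeal t) (j : ℕ) :
    J ^ j ≤ v.geIdeal (j * t) := by
  induction j with
  | zero =>
    rw [pow_zero, Ideal.one_eq_top, zero_mul]
    exact fun r _ => by simp [mem_geIdeal]
  | succ j ih =>
    rw [pow_succ, Nat.succ_mul]
    exact (Ideal.mul_mono ih hJ).trans (geIdeal_mul_le _ _)

theorem intCl_subset_geIdeal {J : Ideal R} {t : ℕ} (hJ : J ≤ v.geIdeal t) :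
    J.intCl ⊆ v.geIdeal t := by
  rintro f ⟨n, -, a, ha, hf⟩
  by_contra hlt
  rw [SetLike.mem_coe, mem_geIdeal, not_le] at hlt
  obtain ⟨m, hm⟩ := ENat.ne_top_iff_exists.1 (hlt.trans_le le_top).ne
  rw [← hm, Nat.cast_lt] at hlt
  have hsum : v (f ^ n) < v (∑ j ∈ Finset.Icc 1 n, a j * f ^ (n - j)) := by
    rw [v.map_pow, ← hm, nsmul_eq_mul, ← Nat.cast_mul]
    refine v.map_lt_sum (ENat.natCast_ne_top _) fun j hj => ?_
    obtain ⟨hj1, hjn⟩ := Finset.mem_Icc.1 hj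
    have haj : ((j * t : ℕ) : ℕ∞) ≤ v (a j) := pow_le_geIdeal hJ j (ha j hj)
    rw [v.map_mul, v.map_pow, ← hm]
    calc ((n * m : ℕ) : ℕ∞) = ((j * m + (n - j) * m : ℕ) : ℕ∞) := by
          rw [← add_mul, Nat.add_sub_cancel' hjn]
      _ < ((j * t + (n - j) * m : ℕ) : ℕ∞) := by
          exact_mod_cast Nat.add_lt_add_right (Nat.mul_lt_mul_of_pos_left hlt hj1) _
      _ ≤ v (a j) + (n - j) • (m : ℕ∞) := by
          push_cast
          exact add_le_add (by exact_mod_cast haj) (by simp)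
  have hval := v.map_add_eq_of_lt_left hsum
  rw [hf, v.map_zero, v.map_pow, ← hm, nsmul_eq_mul, ← Nat.cast_mul] at hval
  exact ENat.top_ne_natCast (n * m) hval

end AddValuation

namespace MvPowerSeries

variable {σ R : Type*} [Ring R] [IsDomain R]

def weightedOrderAddValuation (w : σ → ℕ) : AddValuation (MvPowerSeries σ R) ℕ∞ :=
  AddValuation.of (weightedOrder w) (weightedOrder_zero w) (weightedOrder_one w)
    (fun _ _ => min_weightedOrder_le_add w) (weightedOrder_mul w)

end MvPowerSeries

namespace MvPolynomial

variable {σ R : Type*} [CommRing R] [IsDomain R]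

def weightedOrderAddValuation (w : σ → ℕ) : AddValuation (MvPolynomial σ R) ℕ∞ :=
  (MvPowerSeries.weightedOrderAddValuation w).comap coeToMvPowerSeries.ringHom

theorem weightedOrderAddValuation_apply (w : σ → ℕ) (f : MvPolynomial σ R) :
    weightedOrderAddValuation w f = MvPowerSeries.weightedOrder w (f : MvPowerSeries σ R) := rfl

theorem le_weightedOrderAddValuation_iff {w : σ → ℕ} {t : ℕ} {f : MvPolynomial σ R} :
    (t : ℕ∞) ≤ weightedOrderAddValuation w f ↔ ∀ d ∈ f.support, t ≤ Finsupp.weight w d := by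
  rw [weightedOrderAddValuation_apply]
  constructor
  · intro h d hd
    have := h.trans (MvPowerSeries.weightedOrder_le w (by rwa [coeff_coe, ← mem_support_iff]))
    exact_mod_cast this
  · refine fun h => MvPowerSeries.le_weightedOrder w fun d hd => ?_
    rw [coeff_coe, ← notMem_support_iff]
    exact fun hmem => (h d hmem).not_gt (by exact_mod_cast hd)

@[simp]
theorem weightedOrderAddValuation_X (w : σ → ℕ) (i : σ) :
    weightedOrderAddValuation w (X i : MvPolynomial σ R) = w i := by
  rw [weightedOrderAddValuation_apply, coe_X, MvPowerSeries.X,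
    MvPowerSeries.weightedOrder_monomial_of_ne_zero w one_ne_zero, Finsupp.weight_single, one_smul]

end MvPolynomial

theorem mem_MI1_of_dvd [CommSemiring k] {m i g : MvPolynomial (Fin 3) k}
    (hm : m ∈ ({px, py, pz} : Set (MvPolynomial (Fin 3) k)))
    (hi : i ∈ ({px, py ^ 2, py * pz, pz ^ 2} : Set (MvPolynomial (Fin 3) k))) (hg : m * i ∣ g) :
    g ∈ Ideal.span {px, py, pz} * Ideal.span {px, py ^ 2, py * pz, pz ^ 2} :=
  Ideal.mem_of_dvd _ hg (Ideal.mul_mem_mul (Ideal.subset_span hm) (Ideal.subset_span hi))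

theorem X_pow_mul_mem_MI1 [CommSemiring k] :
    ∀ a b c : ℕ, 2 ≤ a + b + c → 3 ≤ 2 * a + b + c →
      (X 0 ^ a * X 1 ^ b * X 2 ^ c : MvPolynomial (Fin 3) k) ∈
        Ideal.span {px, py, pz} * Ideal.span {px, py ^ 2, py * pz, pz ^ 2}
  | a + 2, b, c, _, _ => mem_MI1_of_dvd (m := px) (i := px) (by simp) (by simp)
      ⟨X 0 ^ a * X 1 ^ b * X 2 ^ c, by simp only [px]; ring⟩
  | 1, b + 1, c, _, _ => mem_MI1_of_dvd (m := py) (i := px) (by simp) (by simp)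
      ⟨X 1 ^ b * X 2 ^ c, by simp only [px, py]; ring⟩
  | 1, 0, c + 1, _, _ => mem_MI1_of_dvd (m := pz) (i := px) (by simp) (by simp)
      ⟨X 2 ^ c, by simp only [px, pz]; ring⟩
  | 0, b + 3, c, _, _ => mem_MI1_of_dvd (m := py) (i := py ^ 2) (by simp) (by simp)
      ⟨X 1 ^ b * X 2 ^ c, by simp only [py]; ring⟩
  | 0, b + 2, c + 1, _, _ => mem_MI1_of_dvd (m := pz) (i := py ^ 2) (by simp) (by simp)
      ⟨X 1 ^ b * X 2 ^ c, by simp only [py, pz]; ring⟩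
  | 0, b + 1, c + 2, _, _ => mem_MI1_of_dvd (m := py) (i := pz ^ 2) (by simp) (by simp)
      ⟨X 1 ^ b * X 2 ^ c, by simp only [py, pz]; ring⟩
  | 0, b, c + 3, _, _ => mem_MI1_of_dvd (m := pz) (i := pz ^ 2) (by simp) (by simp)
      ⟨X 1 ^ b * X 2 ^ c, by simp only [pz]; ring⟩
  | 1, 0, 0, h, _ | 0, 2, 0, _, h | 0, 1, 1, _, h | 0, 1, 0, h, _ | 0, 0, 2, _, h | 0, 0, 1, h, _
  | 0, 0, 0, h, _ => by omega

theorem MI1_le_geIdeal [CommRing k] [IsDomain k] {w : Fin 3 → ℕ} {s t : ℕ} (hM : ∀ i, s ≤ w i)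
    (hx : t ≤ w 0) (hy : t ≤ 2 * w 1) (hyz : t ≤ w 1 + w 2) (hz : t ≤ 2 * w 2) :
    Ideal.span {px, py, pz} * Ideal.span {px, py ^ 2, py * pz, pz ^ 2} ≤
      (weightedOrderAddValuation w : AddValuation (MvPolynomial (Fin 3) k) ℕ∞).geIdeal
        (s + t) := by
  refine (Ideal.mul_mono ?_ ?_).trans (AddValuation.geIdeal_mul_le s t) <;> rw [Ideal.span_le]
  · rintro _ (rfl | rfl | rfl) <;>
      simpa only [px, py, pz, SetLike.mem_coe, AddValuation.mem_geIdeal,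
        weightedOrderAddValuation_X, Nat.cast_le] using hM _
  · rintro _ (rfl | rfl | rfl | rfl) <;>
      simp only [px, py, pz, SetLike.mem_coe, AddValuation.mem_geIdeal, AddValuation.map_mul,
        AddValuation.map_pow, weightedOrderAddValuation_X, nsmul_eq_mul, Nat.cast_ofNat]
    · exact_mod_cast hx
    · exact_mod_cast hy
    · exact_mod_cast hyz
    · exact_mod_cast hz

theorem geIdeal_inf_geIdeal_le_MI1 [CommRing k] [IsDomain k] :
    (weightedOrderAddValuation ![1, 1, 1] : AddValuation (MvPolynomial (Fin 3) k) ℕ∞).geIdeal 2 ⊓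
        (weightedOrderAddValuation ![2, 1, 1]).geIdeal 3 ≤
      Ideal.span {px, py, pz} * Ideal.span {px, py ^ 2, py * pz, pz ^ 2} := by
  rintro f ⟨h₁, h₂⟩
  rw [SetLike.mem_coe, AddValuation.mem_geIdeal, le_weightedOrderAddValuation_iff] at h₁ h₂
  rw [f.as_sum]
  refine Ideal.sum_mem _ fun d hd => ?_
  rw [monomial_eq, Finsupp.prod_fintype _ _ fun i => pow_zero (X i), Fin.prod_univ_three]
  refine Ideal.mul_mem_left _ _ (X_pow_mul_mem_MI1 _ _ _ ?_ ?_)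
  · simpa [Finsupp.weight_eq_sum, Fin.sum_univ_three] using h₁ d hd
  · simpa [Finsupp.weight_eq_sum, Fin.sum_univ_three, mul_comm] using h₂ d hd

theorem MI1_integrally_closed_general (k : Type*) [Field k] :
    let M : Ideal (MvPolynomial (Fin 3) k) := Ideal.span {px, py, pz}
    let I₁ : Ideal (MvPolynomial (Fin 3) k) := Ideal.span {px, py ^ 2, py * pz, pz ^ 2}
    ((M * I₁ : Ideal (MvPolynomial (Fin 3) k)) : Set (MvPolynomial (Fin 3) k)) =
      (M * I₁).intCl := by
  intro M I₁
  refine (Ideal.subset_intCl _).antisymm fun f hf => geIdeal_inf_geIdeal_le_MI1 ⟨?_, ?_⟩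
  · exact AddValuation.intCl_subset_geIdeal (MI1_le_geIdeal (s := 1) (t := 1)
      (by decide) (by decide) (by decide) (by decide) (by decide)) hf
  · exact AddValuation.intCl_subset_geIdeal (MI1_le_geIdeal (s := 1) (t := 2)
      (by decide) (by decide) (by decide) (by decide) (by decide)) hf

/-- `M I₁` is integrally closed for `I₁ = (x, y², yz, z²)`. -/
theorem MI1_integrally_closed (k : Type*) [Field k] [IsAlgClosed k] :
    let M : Ideal (MvPolynomial (Fin 3) k) := Ideal.span {px, py, pz}
    let I₁ : Ideal (MvPolynomial (Fin 3) k) := Ideal.span {px, py ^ 2, py * pz, pz ^ 2}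
    ((M * I₁ : Ideal (MvPolynomial (Fin 3) k)) : Set (MvPolynomial (Fin 3) k)) =
      (M * I₁).intCl :=
  MI1_integrally_closed_general k

end
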